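/- arXiv:2605.28199 — 6 statements merged into one kernel-verified Lean document; each statement's English description precedes it below -/
import Mathlib

section
/- Let n ≥ 2, 0 < λ ≤ Λ, R > 2, and define ψ_R(x) = 2[((n−1)Λ/λ + 1)x_n − (n−1)(Λ/λ)(1/R)x_n² + (1/R)|x′|²] for x = (x′, x_n) in the half-cube Q_R⁺ = {x : |x′| < R, 0 < x_n < R}. Then for any measurable coefficients a_ij with λI ≤ [a_ij(x)] ≤ ΛI (as symmetric matrices) for all x in Q_R⁺, one has a_ij(x)(ψ_R)_{ij}(x) ≤ 0 for all x ∈ Q_R⁺, i.e. ψ_R is a supersolution of the linear uniformly elliptic operator. -/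
/-!
The barrier is a separable quadratic, so its Hessian is the constant diagonal matrix with entries
`4/R` in the tangential directions and `-4nΛ/(λR)` in the normal one. Hence
`a_ij ψ_ij = (4/R) ∑_k a_kk - (4nΛ/(λR)) a_nn`, and testing the ellipticity bounds on basis
vectors (`a_kk ≤ Λ`, `a_nn ≥ λ`) bounds this by `4nΛ/R - 4nΛ/R = 0`.
-/

open Finset

/-- Second partial derivative `∂_j ∂_i f` at `x`. -/
noncomputable def pd2 {m : ℕ} (f : (Fin m → ℝ) → ℝ) (x : Fin m → ℝ) (i j : Fin m) : ℝ :=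
  fderiv ℝ (fun y => fderiv ℝ f y (Pi.single i 1)) x (Pi.single j 1)

section SeparableQuadratic

variable {m : ℕ} (c w : Fin m → ℝ)

theorem fderiv_sum_linear_add_sq (y v : Fin m → ℝ) :
    fderiv ℝ (fun y : Fin m → ℝ => ∑ k, (c k * y k + w k * y k ^ 2)) y v
      = ∑ k, (c k + 2 * w k * y k) * v k := by
  have hcoord (k : Fin m) : HasFDerivAt (fun y : Fin m → ℝ => y k)
      (ContinuousLinearMap.proj k : (Fin m → ℝ) →L[ℝ] ℝ) y := hasFDerivAt_apply k y
  have H := HasFDerivAt.fun_sum fun k (_ : k ∈ univ) =>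
    ((hcoord k).const_mul (c k)).fun_add (((hcoord k).pow 2).const_mul (w k))
  rw [H.fderiv, _root_.sum_apply]
  refine sum_congr rfl fun k _ => ?_
  simp only [Nat.add_one_sub_one, pow_one, nsmul_eq_mul, Nat.cast_ofNat, add_apply, smul_apply,
    ContinuousLinearMap.proj_apply, smul_eq_mul]
  ring

theorem pd2_sum_linear_add_sq (x : Fin m → ℝ) (i j : Fin m) :
    pd2 (fun y => ∑ k, (c k * y k + w k * y k ^ 2)) x i j = if i = j then 2 * w i else 0 := by
  have hgrad : (fun y => fderiv ℝ (fun y : Fin m → ℝ => ∑ k, (c k * y k + w k * y k ^ 2)) y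
      (Pi.single i 1)) = fun y => c i + 2 * w i * y i := by
    funext y
    simp [fderiv_sum_linear_add_sq, Pi.single_apply]
  rw [pd2, hgrad, fderiv_const_add, ((hasFDerivAt_apply i x).const_mul (2 * w i)).fderiv]
  simp [Pi.single_apply]

theorem sum_mul_pd2_sum_linear_add_sq (A : Matrix (Fin m) (Fin m) ℝ) (x : Fin m → ℝ) :
    ∑ i, ∑ j, A i j * pd2 (fun y => ∑ k, (c k * y k + w k * y k ^ 2)) x i j
      = ∑ i, 2 * w i * A i i := by
  simp [pd2_sum_linear_add_sq, mul_comm]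

end SeparableQuadratic

theorem diag_mem_Icc_of_quadForm_bounds {m : ℕ} (A : Matrix (Fin m) (Fin m) ℝ) {lam Lam : ℝ}
    (hA : ∀ ξ : Fin m → ℝ, lam * ∑ i, ξ i ^ 2 ≤ ∑ i, ∑ j, A i j * ξ i * ξ j ∧
      ∑ i, ∑ j, A i j * ξ i * ξ j ≤ Lam * ∑ i, ξ i ^ 2)
    (p : Fin m) : lam ≤ A p p ∧ A p p ≤ Lam := by
  simpa [Pi.single_apply] using hA (Pi.single p 1)

theorem stmt0_general (n : ℕ) (lam Lam R : ℝ) (hlam : 0 < lam) (hle : lam ≤ Lam)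
    (hR : 2 < R)
    (a : (Fin (n + 1) → ℝ) → Matrix (Fin (n + 1)) (Fin (n + 1)) ℝ)
    (Q : Set (Fin (n + 1) → ℝ))
    (hell : ∀ x ∈ Q, ∀ ξ : Fin (n + 1) → ℝ,
      lam * ∑ i, (ξ i) ^ 2 ≤ ∑ i, ∑ j, a x i j * ξ i * ξ j ∧
      ∑ i, ∑ j, a x i j * ξ i * ξ j ≤ Lam * ∑ i, (ξ i) ^ 2)
    (ψ : (Fin (n + 1) → ℝ) → ℝ)
    (hψ : ψ = fun x => 2 * (((n : ℝ) * (Lam / lam) + 1) * x (Fin.last n)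
      - (n : ℝ) * (Lam / lam) * (1 / R) * (x (Fin.last n)) ^ 2
      + (1 / R) * ∑ i : Fin n, (x i.castSucc) ^ 2)) :
    ∀ x ∈ Q, ∑ i, ∑ j, a x i j * pd2 ψ x i j ≤ 0 := by
  intro x hx
  set W : Fin (n + 1) → ℝ :=
    Fin.snoc (α := fun _ => ℝ) (fun _ => 2 / R) (-(2 * n * (Lam / lam) / R))
  have hψW : ψ = fun y =>
      ∑ k, (Fin.snoc (α := fun _ => ℝ) 0 (2 * (n * (Lam / lam) + 1)) k * y k + W k * y k ^ 2) := by
    subst hψ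
    funext y
    simp only [one_div, Fin.sum_univ_castSucc, Fin.snoc_castSucc, Pi.zero_apply, zero_mul,
      zero_add, Fin.snoc_last, neg_mul, W]
    rw [← mul_sum]
    ring
  have hdiag (p : Fin (n + 1)) : lam ≤ a x p p ∧ a x p p ≤ Lam :=
    diag_mem_Icc_of_quadForm_bounds (a x) (hell x hx) p
  have htrace : ∑ k : Fin n, a x k.castSucc k.castSucc ≤ n * Lam :=
    calc _ ≤ ∑ _k : Fin n, Lam := sum_le_sum fun k _ => (hdiag k.castSucc).2
      _ = n * Lam := by simp
  have hLam : 0 < Lam := hlam.trans_le hle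
  have hR0 : 0 < R := by linarith
  rw [hψW, sum_mul_pd2_sum_linear_add_sq, Fin.sum_univ_castSucc]
  simp only [Fin.snoc_castSucc, Fin.snoc_last, mul_neg, neg_mul, add_neg_le_iff_le_add, zero_add, W]
  calc ∑ k : Fin n, 2 * (2 / R) * a x k.castSucc k.castSucc
      = 4 / R * ∑ k : Fin n, a x k.castSucc k.castSucc := by rw [mul_sum]; ring_nf
    _ ≤ 4 / R * (n * Lam) := by gcongr
    _ = 2 * (2 * n * (Lam / lam) / R) * lam := by field_simp; ring
    _ ≤ 2 * (2 * n * (Lam / lam) / R) * a x (Fin.last n) (Fin.last n) := by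
      gcongr
      exact (hdiag _).1

/-- The barrier `ψ_R` is a supersolution of any uniformly elliptic operator on the
half-cube `Q_R⁺` (dimension `n+1 ≥ 2`, with `n` tangential directions). -/
theorem stmt0 (n : ℕ) (hn : 1 ≤ n) (lam Lam R : ℝ) (hlam : 0 < lam) (hle : lam ≤ Lam)
    (hR : 2 < R)
    (a : (Fin (n + 1) → ℝ) → Matrix (Fin (n + 1)) (Fin (n + 1)) ℝ)
    (Q : Set (Fin (n + 1) → ℝ))
    (hQ : Q = {x | ∑ i : Fin n, (x i.castSucc) ^ 2 < R ^ 2 ∧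
      0 < x (Fin.last n) ∧ x (Fin.last n) < R})
    (hell : ∀ x ∈ Q, ∀ ξ : Fin (n + 1) → ℝ,
      lam * ∑ i, (ξ i) ^ 2 ≤ ∑ i, ∑ j, a x i j * ξ i * ξ j ∧
      ∑ i, ∑ j, a x i j * ξ i * ξ j ≤ Lam * ∑ i, (ξ i) ^ 2)
    (ψ : (Fin (n + 1) → ℝ) → ℝ)
    (hψ : ψ = fun x => 2 * (((n : ℝ) * (Lam / lam) + 1) * x (Fin.last n)
      - (n : ℝ) * (Lam / lam) * (1 / R) * (x (Fin.last n)) ^ 2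
      + (1 / R) * ∑ i : Fin n, (x i.castSucc) ^ 2)) :
    ∀ x ∈ Q, ∑ i, ∑ j, a x i j * pd2 ψ x i j ≤ 0 :=
  stmt0_general n lam Lam R hlam hle hR a Q hell ψ hψ
end

section
/- Let n ≥ 2 and let φ : ℝⁿ ∖ {0} → ℝ be C². Define the Kelvin transform ψ(x) = |x|^{2−n} φ(x/|x|²) for x ≠ 0. If Δφ(y) = f(y) for y ≠ 0, then Δψ(x) = |x|^{−2−n} f(x/|x|²) for all x ≠ 0. -/
/-!
Write `σ` for the inversion `y ↦ y / ‖y‖²` and `d` for the dimension. The derivative of `σ` at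
`x` is `‖x‖⁻²` times a reflection, so `σ` is conformal and `Δ (φ ∘ σ) = ‖x‖⁻⁴ (Δφ)(σ x) +
Dφ(σ x) (Δσ x)`, with `Δσ x = (4 - 2d) ‖x‖⁻⁴ x`. The weight `‖x‖^(2-d)` is harmonic off the
origin, so the product rule `Δ (u v) = u Δv + 2 ⟪∇u, ∇v⟫ + v Δu` leaves, besides
`‖x‖^(-2-d) (Δφ)(σ x)`, only first-order terms in `Dφ(σ x) x`, and these cancel.
-/

open Finset

/-- Euclidean Laplacian, written via iterated directional derivatives. -/
noncomputable def lap {n : ℕ} (f : EuclideanSpace ℝ (Fin n) → ℝ)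
    (x : EuclideanSpace ℝ (Fin n)) : ℝ :=
  ∑ i, fderiv ℝ (fun z => fderiv ℝ f z (EuclideanSpace.single i 1)) x
    (EuclideanSpace.single i 1)

open Filter Topology InnerProductSpace Laplacian EuclideanGeometry
open scoped Gradient

section Regularity

variable {E F : Type*} [NormedAddCommGroup E] [NormedSpace ℝ E]
  [NormedAddCommGroup F] [NormedSpace ℝ F] {f : E → F} {x : E}

theorem ContDiffAt.differentiableAt_fderiv (hf : ContDiffAt ℝ 2 f x) :
    DifferentiableAt ℝ (fderiv ℝ f) x :=
  (hf.fderiv_right (m := 1) le_rfl).differentiableAt one_ne_zero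

theorem ContDiffAt.eventually_differentiableAt (hf : ContDiffAt ℝ 2 f x) :
    ∀ᶠ y in 𝓝 x, DifferentiableAt ℝ f y :=
  (hf.eventually (by simp)).mono fun _ hy => hy.differentiableAt two_ne_zero

theorem hasFDerivAt_fderiv_apply (hf : DifferentiableAt ℝ (fderiv ℝ f) x) (w : E) :
    HasFDerivAt (fun y => fderiv ℝ f y w) ((fderiv ℝ (fderiv ℝ f) x).flip w) x := by
  simpa using hf.hasFDerivAt.clm_apply (hasFDerivAt_const w x)

end Regularity

theorem norm_sq_rpow {E : Type*} [SeminormedAddCommGroup E] (y : E) (q : ℝ) :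
    (‖y‖ ^ 2) ^ q = ‖y‖ ^ (2 * q) := by
  rw [← Real.rpow_natCast, ← Real.rpow_mul (norm_nonneg y), Nat.cast_ofNat]

section RadialCalculus

variable {E : Type*} [NormedAddCommGroup E] [InnerProductSpace ℝ E] {x : E}

theorem hasFDerivAt_norm_rpow_of_ne_zero (hx : x ≠ 0) (p : ℝ) :
    HasFDerivAt (fun y : E => ‖y‖ ^ p) ((p * ‖x‖ ^ (p - 2)) • innerSL ℝ x) x := by
  have h := (hasStrictFDerivAt_norm_sq x).hasFDerivAt.rpow_const (p := p / 2)
    (Or.inl (pow_ne_zero 2 (norm_ne_zero_iff.2 hx)))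
  simp only [norm_sq_rpow, mul_div_cancel₀ p two_ne_zero] at h
  convert h using 1
  ext v
  simp [show 2 * (p / 2 - 1) = p - 2 by ring]
  ring

theorem contDiffAt_norm_rpow_of_ne_zero (hx : x ≠ 0) (p : ℝ) {n : WithTop ℕ∞} :
    ContDiffAt ℝ n (fun y : E => ‖y‖ ^ p) x :=
  (contDiffAt_norm ℝ hx).rpow_const_of_ne (norm_ne_zero_iff.2 hx)

theorem gradient_norm_rpow_of_ne_zero [CompleteSpace E] (hx : x ≠ 0) (p : ℝ) :
    ∇ (fun y : E => ‖y‖ ^ p) x = (p * ‖x‖ ^ (p - 2)) • x := by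
  refine (hasGradientAt_iff_hasFDerivAt.2
    ((hasFDerivAt_norm_rpow_of_ne_zero hx p).congr_fderiv ?_)).gradient
  ext v
  simp

theorem inversion_zero_one_eq_rpow_smul (y : E) : inversion 0 1 y = ‖y‖ ^ (-2 : ℝ) • y := by
  rw [Real.rpow_neg (norm_nonneg y)]
  simp [inversion]

theorem contDiffAt_inversion_zero_one (hx : x ≠ 0) {n : ℕ∞} :
    ContDiffAt ℝ n (inversion (0 : E) 1) x :=
  contDiffAt_const.inversion contDiffAt_const contDiffAt_id hx

end RadialCalculus

section KelvinTransform

variable {E F : Type*} [NormedAddCommGroup E] [InnerProductSpace ℝ E]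
  [NormedAddCommGroup F] [NormedSpace ℝ F] {x : E}

noncomputable def kelvinTransform (φ : E → F) : E → F :=
  fun y => ‖y‖ ^ (2 - Module.finrank ℝ E : ℝ) • φ (inversion 0 1 y)

theorem contDiffAt_kelvinTransform {φ : E → F} (hx : x ≠ 0)
    (hφ : ContDiffAt ℝ 2 φ (inversion 0 1 x)) : ContDiffAt ℝ 2 (kelvinTransform φ) x :=
  (contDiffAt_norm_rpow_of_ne_zero hx _).smul (hφ.comp x (contDiffAt_inversion_zero_one hx))

end KelvinTransform

section Laplacian

variable {E F : Type*} [NormedAddCommGroup E] [InnerProductSpace ℝ E] [FiniteDimensional ℝ E]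
  [NormedAddCommGroup F] [NormedSpace ℝ F] {x : E}

theorem laplacian_eq_sum_fderiv_apply {ι : Type*} [Fintype ι] (b : OrthonormalBasis ι ℝ E)
    {f : E → F} (hf : DifferentiableAt ℝ (fderiv ℝ f) x) :
    Δ f x = ∑ i, fderiv ℝ (fun y => fderiv ℝ f y (b i)) x (b i) := by
  simp [laplacian_eq_iteratedFDeriv_orthonormalBasis f b, iteratedFDeriv_two_apply,
    (hasFDerivAt_fderiv_apply hf _).fderiv]

theorem ContDiffAt.laplacian_smul_fun {u : E → ℝ} {v : E → F} (hu : ContDiffAt ℝ 2 u x)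
    (hv : ContDiffAt ℝ 2 v x) :
    Δ (fun y => u y • v y) x = u x • Δ v x + (2 : ℝ) • fderiv ℝ v x (∇ u x) + Δ u x • v x := by
  set b := stdOrthonormalBasis ℝ E
  have hu₁ := hasFDerivAt_fderiv_apply hu.differentiableAt_fderiv
  have hv₁ := hasFDerivAt_fderiv_apply hv.differentiableAt_fderiv
  have hstep (i) : fderiv ℝ (fun y => fderiv ℝ (fun y => u y • v y) y (b i)) x (b i) =
      u x • fderiv ℝ (fun y => fderiv ℝ v y (b i)) x (b i)
        + (2 : ℝ) • (fderiv ℝ u x (b i) • fderiv ℝ v x (b i))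
        + fderiv ℝ (fun y => fderiv ℝ u y (b i)) x (b i) • v x := by
    have hloc : (fun y => fderiv ℝ (fun y => u y • v y) y (b i)) =ᶠ[𝓝 x]
        fun y => u y • fderiv ℝ v y (b i) + fderiv ℝ u y (b i) • v y := by
      filter_upwards [hu.eventually_differentiableAt, hv.eventually_differentiableAt]
        with y huy hvy
      simp [fderiv_fun_smul huy hvy]
    have hderiv : HasFDerivAt
        (fun y => u y • fderiv ℝ v y (b i) + fderiv ℝ u y (b i) • v y) _ x :=
      ((hu.differentiableAt two_ne_zero).hasFDerivAt.smul (hv₁ (b i))).add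
        ((hu₁ (b i)).smul (hv.differentiableAt two_ne_zero).hasFDerivAt)
    rw [hloc.fderiv_eq, hderiv.fderiv, (hu₁ (b i)).fderiv, (hv₁ (b i)).fderiv]
    simp only [add_apply, smul_apply, ContinuousLinearMap.smulRight_apply,
      ContinuousLinearMap.flip_apply]
    module
  have hgrad : ∑ i, fderiv ℝ u x (b i) • fderiv ℝ v x (b i) = fderiv ℝ v x (∇ u x) := by
    conv_rhs => rw [← b.sum_repr' (∇ u x)]
    simp [gradient, real_inner_comm _ (b _)]
  rw [laplacian_eq_sum_fderiv_apply b (f := fun y => u y • v y)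
      (hu.smul hv).differentiableAt_fderiv,
    laplacian_eq_sum_fderiv_apply b hu.differentiableAt_fderiv,
    laplacian_eq_sum_fderiv_apply b hv.differentiableAt_fderiv, ← hgrad]
  simp only [hstep, Finset.sum_add_distrib, Finset.smul_sum, Finset.sum_smul]

/-- `U` carries an orthonormal basis of `E` to one of `G`, which turns the second-order term of
the chain rule into `a² Δφ`. -/
theorem ContDiffAt.laplacian_comp_of_fderiv_eq_smul_isometry {G : Type*} [NormedAddCommGroup G]
    [InnerProductSpace ℝ G] [FiniteDimensional ℝ G] {g : E → G} {φ : G → F}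
    (hφ : ContDiffAt ℝ 2 φ (g x)) (hg : ContDiffAt ℝ 2 g x) {a : ℝ} (U : E ≃ₗᵢ[ℝ] G)
    (hDg : fderiv ℝ g x = a • (U : E →L[ℝ] G)) :
    Δ (fun y => φ (g y)) x = a ^ 2 • Δ φ (g x) + fderiv ℝ φ (g x) (Δ g x) := by
  set b := stdOrthonormalBasis ℝ E
  have hφ₁ := hasFDerivAt_fderiv_apply hφ.differentiableAt_fderiv
  have hg₁ := hasFDerivAt_fderiv_apply hg.differentiableAt_fderiv
  have hstep (i) : fderiv ℝ (fun y => fderiv ℝ (fun y => φ (g y)) y (b i)) x (b i) =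
      a ^ 2 • fderiv ℝ (fun z => fderiv ℝ φ z (U (b i))) (g x) (U (b i))
        + fderiv ℝ φ (g x) (fderiv ℝ (fun y => fderiv ℝ g y (b i)) x (b i)) := by
    have hloc : (fun y => fderiv ℝ (fun y => φ (g y)) y (b i)) =ᶠ[𝓝 x]
        fun y => fderiv ℝ φ (g y) (fderiv ℝ g y (b i)) := by
      filter_upwards [hg.continuousAt.eventually hφ.eventually_differentiableAt,
        hg.eventually_differentiableAt] with y hφy hgy
      simp [fderiv_fun_comp y hφy hgy]
    have hderiv : HasFDerivAt (fun y => fderiv ℝ φ (g y) (fderiv ℝ g y (b i))) _ x :=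
      (hφ.differentiableAt_fderiv.hasFDerivAt.comp x
        (hg.differentiableAt two_ne_zero).hasFDerivAt).clm_apply (hg₁ (b i))
    rw [hloc.fderiv_eq, hderiv.fderiv, (hφ₁ _).fderiv, (hg₁ (b i)).fderiv, hDg]
    simp only [add_apply, ContinuousLinearMap.comp_apply, ContinuousLinearMap.flip_apply,
      smul_apply, map_smul, Function.comp_apply, ContinuousLinearEquiv.coe_coe,
      LinearIsometryEquiv.coe_toContinuousLinearEquiv, smul_smul, sq, add_comm]
  rw [laplacian_eq_sum_fderiv_apply b (f := fun y => φ (g y))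
      (hφ.comp x hg).differentiableAt_fderiv,
    laplacian_eq_sum_fderiv_apply (b.map U) hφ.differentiableAt_fderiv,
    laplacian_eq_sum_fderiv_apply b hg.differentiableAt_fderiv]
  simp [hstep, Finset.sum_add_distrib, Finset.smul_sum]

theorem laplacian_id : Δ (fun y : E => y) x = 0 := by
  rw [laplacian_eq_sum_fderiv_apply (stdOrthonormalBasis ℝ E) (f := fun y : E => y)
    (contDiffAt_id (n := 2)).differentiableAt_fderiv]
  simp

theorem laplacian_norm_rpow_of_ne_zero (hx : x ≠ 0) (p : ℝ) :
    Δ (fun y : E => ‖y‖ ^ p) x = p * (p + Module.finrank ℝ E - 2) * ‖x‖ ^ (p - 2) := by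
  set b := stdOrthonormalBasis ℝ E
  have hstep (i) : fderiv ℝ (fun y => fderiv ℝ (fun y : E => ‖y‖ ^ p) y (b i)) x (b i) =
      p * (p - 2) * ‖x‖ ^ (p - 4) * (inner ℝ x (b i) * inner ℝ (b i) x)
        + p * ‖x‖ ^ (p - 2) * inner ℝ (b i) (b i) := by
    have hloc : (fun y => fderiv ℝ (fun y : E => ‖y‖ ^ p) y (b i)) =ᶠ[𝓝 x]
        fun y => p * ‖y‖ ^ (p - 2) * inner ℝ (b i) y := by
      filter_upwards [eventually_ne_nhds hx] with y hy
      simp [(hasFDerivAt_norm_rpow_of_ne_zero hy p).fderiv, real_inner_comm]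
    have hderiv : HasFDerivAt (fun y => p * ‖y‖ ^ (p - 2) * inner ℝ (b i) y) _ x :=
      ((hasFDerivAt_norm_rpow_of_ne_zero hx (p - 2)).const_mul p).mul
        (innerSL ℝ (b i)).hasFDerivAt
    rw [hloc.fderiv_eq, hderiv.fderiv]
    simp [show p - 2 - 2 = p - 4 by ring]
    ring
  have hpow : ‖x‖ ^ (p - 2) = ‖x‖ ^ (p - 4) * ‖x‖ ^ 2 := by
    rw [← Real.rpow_natCast, ← Real.rpow_add (norm_pos_iff.2 hx)]
    congr 1
    ring
  rw [laplacian_eq_sum_fderiv_apply b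
    (contDiffAt_norm_rpow_of_ne_zero hx p).differentiableAt_fderiv]
  simp [hstep, Finset.sum_add_distrib, ← Finset.mul_sum, b.sum_inner_mul_inner, b.orthonormal.1]
  rw [hpow]
  ring

theorem laplacian_inversion_zero_one (hx : x ≠ 0) :
    Δ (inversion (0 : E) 1) x = ((4 - 2 * Module.finrank ℝ E) * ‖x‖ ^ (-4 : ℝ)) • x := by
  have hsmul := (contDiffAt_norm_rpow_of_ne_zero hx (-2)).laplacian_smul_fun
    (v := fun y : E => y) contDiffAt_id
  rw [funext inversion_zero_one_eq_rpow_smul, hsmul, laplacian_id,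
    gradient_norm_rpow_of_ne_zero hx, laplacian_norm_rpow_of_ne_zero hx, fderiv_fun_id,
    show (-2 : ℝ) - 2 = -4 by norm_num]
  simp only [smul_zero, zero_add, ContinuousLinearMap.id_apply]
  module

theorem laplacian_kelvinTransform {φ : E → F} (hx : x ≠ 0)
    (hφ : ContDiffAt ℝ 2 φ (inversion 0 1 x)) :
    Δ (kelvinTransform φ) x = ‖x‖ ^ (-2 - Module.finrank ℝ E : ℝ) • Δ φ (inversion 0 1 x) := by
  have hσ : ContDiffAt ℝ 2 (inversion (0 : E) 1) x := contDiffAt_inversion_zero_one hx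
  have hDσ : fderiv ℝ (inversion (0 : E) 1) x =
      ‖x‖ ^ (-2 : ℝ) • ((ℝ ∙ x)ᗮ.reflection : E →L[ℝ] E) := by
    rw [(hasFDerivAt_inversion hx).fderiv, Real.rpow_neg (norm_nonneg x)]
    simp
  have hprod : Δ (kelvinTransform φ) x = _ :=
    (contDiffAt_norm_rpow_of_ne_zero hx _).laplacian_smul_fun (hφ.comp x hσ)
  rw [hprod, hφ.laplacian_comp_of_fderiv_eq_smul_isometry hσ _ hDσ,
    laplacian_norm_rpow_of_ne_zero hx, gradient_norm_rpow_of_ne_zero hx,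
    laplacian_inversion_zero_one hx,
    fderiv_fun_comp x (hφ.differentiableAt two_ne_zero) (hσ.differentiableAt two_ne_zero), hDσ]
  simp only [ContinuousLinearMap.comp_apply, smul_apply, ContinuousLinearEquiv.coe_coe,
    LinearIsometryEquiv.coe_toContinuousLinearEquiv, map_smul, map_neg,
    Submodule.reflection_orthogonalComplement_singleton_eq_neg]
  set d : ℝ := (Module.finrank ℝ E : ℝ)
  have hr : 0 < ‖x‖ := norm_pos_iff.2 hx
  have hΔ : ‖x‖ ^ (2 - d) * (‖x‖ ^ (-2 : ℝ)) ^ 2 = ‖x‖ ^ (-2 - d) := by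
    rw [← Real.rpow_natCast, ← Real.rpow_mul hr.le, ← Real.rpow_add hr]
    norm_num
    ring_nf
  have hD : ‖x‖ ^ (2 - d) * ((4 - 2 * d) * ‖x‖ ^ (-4 : ℝ))
      - 2 * ((2 - d) * ‖x‖ ^ (2 - d - 2)) * ‖x‖ ^ (-2 : ℝ) = 0 := by
    have e₁ : ‖x‖ ^ (2 - d) * ‖x‖ ^ (-4 : ℝ) = ‖x‖ ^ (-2 - d) := by
      rw [← Real.rpow_add hr]
      ring_nf
    have e₂ : ‖x‖ ^ (2 - d - 2) * ‖x‖ ^ (-2 : ℝ) = ‖x‖ ^ (-2 - d) := by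
      rw [← Real.rpow_add hr]
      ring_nf
    linear_combination (4 - 2 * d) * e₁ - 2 * (2 - d) * e₂
  linear_combination (norm := module)
    hΔ • Δ φ (inversion 0 1 x) + hD • fderiv ℝ φ (inversion 0 1 x) x

end Laplacian

theorem lap_eq_laplacian {n : ℕ} {f : EuclideanSpace ℝ (Fin n) → ℝ}
    {x : EuclideanSpace ℝ (Fin n)} (hf : DifferentiableAt ℝ (fderiv ℝ f) x) :
    lap f x = Δ f x := by
  simp [lap, laplacian_eq_sum_fderiv_apply (EuclideanSpace.basisFun (Fin n) ℝ) hf]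

theorem stmt6_general (n : ℕ)
    (φ f : EuclideanSpace ℝ (Fin n) → ℝ)
    (hφ : ContDiffOn ℝ 2 φ {(0 : EuclideanSpace ℝ (Fin n))}ᶜ)
    (hlap : ∀ y : EuclideanSpace ℝ (Fin n), y ≠ 0 → lap φ y = f y) :
    ∀ x : EuclideanSpace ℝ (Fin n), x ≠ 0 →
      lap (fun w => ‖w‖ ^ ((2:ℝ) - n) * φ ((‖w‖ ^ 2)⁻¹ • w)) x
        = ‖x‖ ^ (-(2:ℝ) - n) * f ((‖x‖ ^ 2)⁻¹ • x) := by
  intro x hx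
  have hinv (w : EuclideanSpace ℝ (Fin n)) : (‖w‖ ^ 2)⁻¹ • w = inversion 0 1 w := by
    simp [inversion]
  have hσx : inversion 0 1 x ≠ 0 := (inversion_eq_center one_ne_zero).not.2 hx
  have hφx : ContDiffAt ℝ 2 φ (inversion 0 1 x) :=
    hφ.contDiffAt (isOpen_compl_singleton.mem_nhds hσx)
  have hψ : (fun w => ‖w‖ ^ ((2:ℝ) - n) * φ ((‖w‖ ^ 2)⁻¹ • w)) = kelvinTransform φ := by
    funext w
    simp [kelvinTransform, hinv]
  rw [hψ, lap_eq_laplacian (contDiffAt_kelvinTransform hx hφx).differentiableAt_fderiv,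
    laplacian_kelvinTransform hx hφx, ← lap_eq_laplacian hφx.differentiableAt_fderiv,
    hlap _ hσx, hinv, finrank_euclideanSpace_fin, smul_eq_mul]

/-- Transformation law of the Laplacian under the Kelvin transform
`ψ(x) = |x|^{2−n} φ(x/|x|²)`: if `Δφ = f` off the origin, then
`Δψ(x) = |x|^{−2−n} f(x/|x|²)`. -/
theorem stmt6 (n : ℕ) (hn : 2 ≤ n)
    (φ f : EuclideanSpace ℝ (Fin n) → ℝ)
    (hφ : ContDiffOn ℝ 2 φ {(0 : EuclideanSpace ℝ (Fin n))}ᶜ)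
    (hlap : ∀ y : EuclideanSpace ℝ (Fin n), y ≠ 0 → lap φ y = f y) :
    ∀ x : EuclideanSpace ℝ (Fin n), x ≠ 0 →
      lap (fun w => ‖w‖ ^ ((2:ℝ) - n) * φ ((‖w‖ ^ 2)⁻¹ • w)) x
        = ‖x‖ ^ (-(2:ℝ) - n) * f ((‖x‖ ^ 2)⁻¹ • x) :=
  stmt6_general n φ f hφ hlap
end

section
/- Let Ω ⊂ ℝ² and let u ∈ C²(Ω) satisfy a_{11}u_{11} + 2a_{12}u_{12} + a_{22}u_{22} = 0 in Ω, where the symmetric matrix [a_ij(x)] satisfies I ≤ [a_ij(x)] ≤ γI pointwise for some γ ≥ 1. Then the pair w = (p, q) := (u_{x₂}, u_{x₁}) satisfies the quasiconformality inequality p₁² + p₂² + q₁² + q₂² ≤ (1 + γ)(p₁q₂ − p₂q₁) at every point of Ω, i.e. w is K-quasiconformal in Ω with K = (1 + γ)/2. -/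
/-!
Write the coefficient matrix and the Hessian as `M = s I + M₀`, `H = t I + H₀` with `M₀`, `H₀`
traceless. The equation `tr (M H) = 0` reads `2 s t = -⟨M₀, H₀⟩`, so Cauchy–Schwarz gives
`2 s |t| ≤ |M₀| |H₀|` in Frobenius norms. The eigenvalues
of `M` are `s ± |M₀|/√2`, so `1 ≤ M ≤ γ` forces `(γ + 1) |M₀| ≤ (γ - 1) √2 s`, whence
`(γ + 1) |t| ≤ (γ - 1) |H₀| / √2`. Since `|H|² = 2 t² + |H₀|²` and `-det H = |H₀|² / 2 - t²`,
this is the sharp bound `γ |H|² ≤ (1 + γ²) (-det H)`, which implies the claimed one as `γ ≥ 1`.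
-/

open Finset

/-- Second partial derivative `∂_j ∂_i f` at `x` in the plane. -/
noncomputable def pd2e (f : EuclideanSpace ℝ (Fin 2) → ℝ)
    (x : EuclideanSpace ℝ (Fin 2)) (i j : Fin 2) : ℝ :=
  fderiv ℝ (fun y => fderiv ℝ f y (EuclideanSpace.single i 1)) x (EuclideanSpace.single j 1)

lemma pd2e_eq_fderiv_fderiv {f : EuclideanSpace ℝ (Fin 2) → ℝ} {x : EuclideanSpace ℝ (Fin 2)}
    (hf : ContDiffAt ℝ 2 f x) (i j : Fin 2) :
    pd2e f x i j =
      fderiv ℝ (fderiv ℝ f) x (EuclideanSpace.single j 1) (EuclideanSpace.single i 1) := by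
  have hdiff : DifferentiableAt ℝ (fderiv ℝ f) x :=
    (hf.fderiv_right (m := 1) le_rfl).differentiableAt one_ne_zero
  rw [pd2e, fderiv_clm_apply hdiff (differentiableAt_const _)]
  simp

lemma pd2e_comm {f : EuclideanSpace ℝ (Fin 2) → ℝ} {x : EuclideanSpace ℝ (Fin 2)}
    (hf : ContDiffAt ℝ 2 f x) (i j : Fin 2) : pd2e f x i j = pd2e f x j i := by
  rw [pd2e_eq_fderiv_fderiv hf, pd2e_eq_fderiv_fderiv hf]
  exact (hf.isSymmSndFDerivAt (by simp)).eq _ _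

section PlaneQuadraticForm

variable {l Λ a b c A B C : ℝ}

lemma le_add_and_discr_le_of_le_quadForm
    (h : ∀ x y : ℝ, l * (x ^ 2 + y ^ 2) ≤ a * x ^ 2 + 2 * b * x * y + c * y ^ 2) :
    2 * l ≤ a + c ∧ (a - c) ^ 2 + 4 * b ^ 2 ≤ (a + c - 2 * l) ^ 2 := by
  have ha : l ≤ a := by simpa using h 1 0
  have hc : l ≤ c := by simpa using h 0 1
  have hdiscr : discrim (a - l) (2 * b) (c - l) ≤ 0 :=
    discrim_le_zero fun t => by nlinarith [h t 1]
  rw [discrim] at hdiscr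
  constructor <;> nlinarith

lemma sq_add_mul_discr_le_of_quadForm_bounds (hl : 0 ≤ l)
    (hlow : ∀ x y : ℝ, l * (x ^ 2 + y ^ 2) ≤ a * x ^ 2 + 2 * b * x * y + c * y ^ 2)
    (hup : ∀ x y : ℝ, a * x ^ 2 + 2 * b * x * y + c * y ^ 2 ≤ Λ * (x ^ 2 + y ^ 2)) :
    (Λ + l) ^ 2 * ((a - c) ^ 2 + 4 * b ^ 2) ≤ (Λ - l) ^ 2 * (a + c) ^ 2 := by
  obtain ⟨hl_tr, hl_discr⟩ := le_add_and_discr_le_of_le_quadForm hlow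
  obtain ⟨hΛ_tr, hΛ_discr⟩ := le_add_and_discr_le_of_le_quadForm (l := -Λ) (a := -a) (b := -b)
    (c := -c) fun x y => by linarith [hup x y]
  have hΛ : 0 ≤ Λ := by linarith
  set r := √((a - c) ^ 2 + 4 * b ^ 2)
  have hr_low : r ≤ a + c - 2 * l := (Real.sqrt_le_left (by linarith)).2 hl_discr
  have hr_up : r ≤ 2 * Λ - (a + c) := (Real.sqrt_le_left (by linarith)).2 (by nlinarith)
  have hr : (Λ + l) * r ≤ (Λ - l) * (a + c) := by
    linarith [mul_le_mul_of_nonneg_left hr_low hΛ, mul_le_mul_of_nonneg_left hr_up hl]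
  calc (Λ + l) ^ 2 * ((a - c) ^ 2 + 4 * b ^ 2) = ((Λ + l) * r) ^ 2 := by
        rw [mul_pow, Real.sq_sqrt (by positivity)]
    _ ≤ ((Λ - l) * (a + c)) ^ 2 := pow_le_pow_left₀ (by positivity) hr 2
    _ = (Λ - l) ^ 2 * (a + c) ^ 2 := mul_pow _ _ _

lemma sq_mul_sq_le_of_mul_add_eq_zero (h : a * A + 2 * b * B + c * C = 0) :
    ((a + c) * (A + C)) ^ 2 ≤ ((a - c) ^ 2 + 4 * b ^ 2) * ((A - C) ^ 2 + 4 * B ^ 2) := by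
  have htr : (a + c) * (A + C) = -((a - c) * (A - C) + 2 * b * (2 * B)) := by
    linear_combination 2 * h
  rw [htr, neg_sq]
  nlinarith [sq_nonneg ((a - c) * (2 * B) - 2 * b * (A - C))]

theorem mul_sq_add_le_of_elliptic (hl : 0 < l)
    (hlow : ∀ x y : ℝ, l * (x ^ 2 + y ^ 2) ≤ a * x ^ 2 + 2 * b * x * y + c * y ^ 2)
    (hup : ∀ x y : ℝ, a * x ^ 2 + 2 * b * x * y + c * y ^ 2 ≤ Λ * (x ^ 2 + y ^ 2))
    (h : a * A + 2 * b * B + c * C = 0) :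
    l * Λ * (A ^ 2 + 2 * B ^ 2 + C ^ 2) ≤ (l ^ 2 + Λ ^ 2) * (B ^ 2 - A * C) := by
  have htr : 0 < a + c := by linarith [(le_add_and_discr_le_of_le_quadForm hlow).1]
  have hM := sq_add_mul_discr_le_of_quadForm_bounds hl.le hlow hup
  have hCS := sq_mul_sq_le_of_mul_add_eq_zero h
  have hH : (Λ + l) ^ 2 * (A + C) ^ 2 ≤ (Λ - l) ^ 2 * ((A - C) ^ 2 + 4 * B ^ 2) := by
    refine le_of_mul_le_mul_left ?_ (show 0 < (a + c) ^ 2 by positivity)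
    calc (a + c) ^ 2 * ((Λ + l) ^ 2 * (A + C) ^ 2)
        = (Λ + l) ^ 2 * ((a + c) * (A + C)) ^ 2 := by ring
      _ ≤ (Λ + l) ^ 2 * ((a - c) ^ 2 + 4 * b ^ 2) * ((A - C) ^ 2 + 4 * B ^ 2) := by
        rw [mul_assoc]; gcongr
      _ ≤ (Λ - l) ^ 2 * (a + c) ^ 2 * ((A - C) ^ 2 + 4 * B ^ 2) := by gcongr
      _ = (a + c) ^ 2 * ((Λ - l) ^ 2 * ((A - C) ^ 2 + 4 * B ^ 2)) := by ring
  linear_combination hH / 4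

theorem sq_add_le_one_add_mul_of_elliptic {γ : ℝ} (hγ : 1 ≤ γ)
    (hlow : ∀ x y : ℝ, x ^ 2 + y ^ 2 ≤ a * x ^ 2 + 2 * b * x * y + c * y ^ 2)
    (hup : ∀ x y : ℝ, a * x ^ 2 + 2 * b * x * y + c * y ^ 2 ≤ γ * (x ^ 2 + y ^ 2))
    (h : a * A + 2 * b * B + c * C = 0) :
    A ^ 2 + 2 * B ^ 2 + C ^ 2 ≤ (1 + γ) * (B ^ 2 - A * C) := by
  have hsharp : γ * (A ^ 2 + 2 * B ^ 2 + C ^ 2) ≤ (1 + γ ^ 2) * (B ^ 2 - A * C) := by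
    simpa only [one_mul, one_pow] using
      mul_sq_add_le_of_elliptic one_pos (fun x y => (one_mul (x ^ 2 + y ^ 2)).le.trans (hlow x y))
        hup h
  have hdet : 0 ≤ B ^ 2 - A * C :=
    nonneg_of_mul_nonneg_right (hsharp.trans' (mul_nonneg (by linarith) (by positivity)))
      (by positivity)
  refine le_of_mul_le_mul_left ?_ (show 0 < γ by linarith)
  calc γ * (A ^ 2 + 2 * B ^ 2 + C ^ 2) ≤ (1 + γ ^ 2) * (B ^ 2 - A * C) := hsharp
    _ ≤ γ * ((1 + γ) * (B ^ 2 - A * C)) := by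
      linear_combination mul_nonneg (sub_nonneg.2 hγ) hdet

end PlaneQuadraticForm

theorem stmt10_general (γ : ℝ) (hγ : 1 ≤ γ) (Ω : Set (EuclideanSpace ℝ (Fin 2))) (hΩ : IsOpen Ω)
    (u : EuclideanSpace ℝ (Fin 2) → ℝ) (hu : ContDiffOn ℝ 2 u Ω)
    (a : EuclideanSpace ℝ (Fin 2) → Matrix (Fin 2) (Fin 2) ℝ)
    (hell : ∀ x ∈ Ω, ∀ ξ : Fin 2 → ℝ,
      ∑ i, (ξ i) ^ 2 ≤ ∑ i, ∑ j, a x i j * ξ i * ξ j ∧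
      ∑ i, ∑ j, a x i j * ξ i * ξ j ≤ γ * ∑ i, (ξ i) ^ 2)
    (heq : ∀ x ∈ Ω, ∑ i, ∑ j, a x i j * pd2e u x i j = 0) :
    ∀ x ∈ Ω,
      (pd2e u x 1 0) ^ 2 + (pd2e u x 1 1) ^ 2 + (pd2e u x 0 0) ^ 2 + (pd2e u x 0 1) ^ 2 ≤
      (1 + γ) * (pd2e u x 1 0 * pd2e u x 0 1 - pd2e u x 1 1 * pd2e u x 0 0) := by
  intro x hx
  have hsymm := pd2e_comm ((hu x hx).contDiffAt (hΩ.mem_nhds hx)) 1 0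
  -- Only the symmetric part of `a x` is seen by the quadratic form and, the Hessian being
  -- symmetric, by the equation.
  set b := (a x 0 1 + a x 1 0) / 2
  have hquad (ξ₀ ξ₁ : ℝ) : ∑ i, ∑ j, a x i j * ![ξ₀, ξ₁] i * ![ξ₀, ξ₁] j =
      a x 0 0 * ξ₀ ^ 2 + 2 * b * ξ₀ * ξ₁ + a x 1 1 * ξ₁ ^ 2 := by
    simp only [Fin.sum_univ_two, Matrix.cons_val_zero, Matrix.cons_val_one]; ring
  have hnorm (ξ₀ ξ₁ : ℝ) : ∑ i, ![ξ₀, ξ₁] i ^ 2 = ξ₀ ^ 2 + ξ₁ ^ 2 := by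
    simp only [Fin.sum_univ_two, Matrix.cons_val_zero, Matrix.cons_val_one]
  have hlow (ξ₀ ξ₁ : ℝ) :
      ξ₀ ^ 2 + ξ₁ ^ 2 ≤ a x 0 0 * ξ₀ ^ 2 + 2 * b * ξ₀ * ξ₁ + a x 1 1 * ξ₁ ^ 2 := by
    simpa only [hquad, hnorm] using (hell x hx ![ξ₀, ξ₁]).1
  have hup (ξ₀ ξ₁ : ℝ) :
      a x 0 0 * ξ₀ ^ 2 + 2 * b * ξ₀ * ξ₁ + a x 1 1 * ξ₁ ^ 2 ≤ γ * (ξ₀ ^ 2 + ξ₁ ^ 2) := by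
    simpa only [hquad, hnorm] using (hell x hx ![ξ₀, ξ₁]).2
  have hpde : a x 0 0 * pd2e u x 0 0 + 2 * b * pd2e u x 0 1 + a x 1 1 * pd2e u x 1 1 = 0 := by
    have h := heq x hx
    simp only [Fin.sum_univ_two, hsymm] at h
    linear_combination h
  rw [hsymm]
  linear_combination sq_add_le_one_add_mul_of_elliptic hγ hlow hup hpde

/-- If `u` solves a uniformly elliptic equation in the plane with `I ≤ [a_ij] ≤ γI`, then
`w = (u_{x₂}, u_{x₁})` is `K`-quasiconformal with `K = (1+γ)/2`:
`p₁² + p₂² + q₁² + q₂² ≤ (1+γ)(p₁q₂ − p₂q₁)`. -/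
theorem stmt10 (γ : ℝ) (hγ : 1 ≤ γ) (Ω : Set (EuclideanSpace ℝ (Fin 2))) (hΩ : IsOpen Ω)
    (u : EuclideanSpace ℝ (Fin 2) → ℝ) (hu : ContDiffOn ℝ 2 u Ω)
    (a : EuclideanSpace ℝ (Fin 2) → Matrix (Fin 2) (Fin 2) ℝ)
    (hsym : ∀ x ∈ Ω, (a x).IsSymm)
    (hell : ∀ x ∈ Ω, ∀ ξ : Fin 2 → ℝ,
      ∑ i, (ξ i) ^ 2 ≤ ∑ i, ∑ j, a x i j * ξ i * ξ j ∧
      ∑ i, ∑ j, a x i j * ξ i * ξ j ≤ γ * ∑ i, (ξ i) ^ 2)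
    (heq : ∀ x ∈ Ω, ∑ i, ∑ j, a x i j * pd2e u x i j = 0) :
    ∀ x ∈ Ω,
      (pd2e u x 1 0) ^ 2 + (pd2e u x 1 1) ^ 2 + (pd2e u x 0 0) ^ 2 + (pd2e u x 0 1) ^ 2 ≤
      (1 + γ) * (pd2e u x 1 0 * pd2e u x 0 1 - pd2e u x 1 1 * pd2e u x 0 0) :=
  stmt10_general γ hγ Ω hΩ u hu a hell heq
end

section
/- For n ≥ 2, the function u(x) = x₁²/(2(x_n + 1)) + ½(x₂² + ⋯ + x_{n−1}²) + (x_n³ + 3x_n²)/6 is a smooth solution of the Monge–Ampère equation det D²u = 1 in the open half-space ℝⁿ₊ = {x_n > 0}, its Hessian D²u is positive definite there, and on the boundary {x_n = 0} it equals the quadratic polynomial ½|x′|², where x′ = (x₁,…,x_{n−1}). In particular, u is a convex, non-polynomial solution with quadratic boundary data and det D²u = 1. -/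
open Finset

noncomputable def UU (n : ℕ) (e0 en : Fin n) (x : Fin n → ℝ) : ℝ :=
  (x e0) ^ 2 / (2 * (x en + 1))
  + (1/2) * ∑ i ∈ Finset.univ.filter (fun i : Fin n => i ≠ e0 ∧ i ≠ en), (x i) ^ 2
  + ((x en) ^ 3 + 3 * (x en) ^ 2) / 6

noncomputable def gg (n : ℕ) (e0 en i : Fin n) (y : Fin n → ℝ) : ℝ :=
  if i = e0 then y e0 / (y en + 1)
  else if i = en then -((y e0) ^ 2) / (2 * (y en + 1) ^ 2) + ((y en) ^ 2 + 2 * (y en)) / 2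
  else y i

noncomputable def HH (n : ℕ) (e0 en : Fin n) (x : Fin n → ℝ) (i j : Fin n) : ℝ :=
  if i = e0 then (if j = e0 then (x en + 1)⁻¹ else if j = en then -(x e0) / (x en + 1) ^ 2 else 0)
  else if i = en then (if j = e0 then -(x e0) / (x en + 1) ^ 2
    else if j = en then (x e0) ^ 2 / (x en + 1) ^ 3 + (x en + 1) else 0)
  else (if j = i then 1 else 0)

lemma sum_two {n : ℕ} {e0 en : Fin n} (h : e0 ≠ en) (f : Fin n → ℝ)
    (hf : ∀ j, j ≠ e0 → j ≠ en → f j = 0) :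
    ∑ j, f j = f e0 + f en := by
  classical
  rw [← Finset.sum_subset (Finset.subset_univ {e0, en}) (fun x _ hx => by
    simp only [Finset.mem_insert, Finset.mem_singleton, not_or] at hx
    exact hf x hx.1 hx.2)]
  exact Finset.sum_pair h

lemma sum_split {n : ℕ} {e0 en : Fin n} (h : e0 ≠ en) (f : Fin n → ℝ) :
    ∑ j, f j = f e0 + f en
      + ∑ j ∈ Finset.univ.filter (fun i : Fin n => i ≠ e0 ∧ i ≠ en), f j := by
  classical
  have hset : (Finset.univ.erase en).erase e0
      = Finset.univ.filter (fun i : Fin n => i ≠ e0 ∧ i ≠ en) := by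
    ext i; simp [Finset.mem_erase]
  rw [← hset, ← Finset.add_sum_erase _ f (Finset.mem_univ en),
    ← Finset.add_sum_erase _ f (show e0 ∈ Finset.univ.erase en by simp [h])]
  ring

lemma prod_split {n : ℕ} {e0 en : Fin n} (h : e0 ≠ en) (f : Fin n → ℝ) :
    ∏ j, f j = f e0 * f en
      * ∏ j ∈ Finset.univ.filter (fun i : Fin n => i ≠ e0 ∧ i ≠ en), f j := by
  classical
  have hset : (Finset.univ.erase en).erase e0
      = Finset.univ.filter (fun i : Fin n => i ≠ e0 ∧ i ≠ en) := by
    ext i; simp [Finset.mem_erase]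
  rw [← hset, ← Finset.mul_prod_erase _ f (Finset.mem_univ en),
    ← Finset.mul_prod_erase _ f (show e0 ∈ Finset.univ.erase en by simp [h])]
  ring

lemma hasFDerivAt_UU (n : ℕ) (e0 en : Fin n) (hne : e0 ≠ en) (x : Fin n → ℝ)
    (hx : x en + 1 ≠ 0) :
    HasFDerivAt (UU n e0 en)
      (∑ j, gg n e0 en j x • (ContinuousLinearMap.proj j : ((i : Fin n) → ℝ) →L[ℝ] ℝ)) x := by
  classical
  have hB0 : (2:ℝ) * (x en + 1) ≠ 0 := mul_ne_zero two_ne_zero hx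
  have p0 : HasFDerivAt (fun y : Fin n → ℝ => y e0)
      (ContinuousLinearMap.proj e0 : ((i : Fin n) → ℝ) →L[ℝ] ℝ) x :=
    ContinuousLinearMap.hasFDerivAt (ContinuousLinearMap.proj (R := ℝ) (φ := fun _ : Fin n => ℝ) e0)
  have pn : HasFDerivAt (fun y : Fin n → ℝ => y en)
      (ContinuousLinearMap.proj en : ((i : Fin n) → ℝ) →L[ℝ] ℝ) x :=
    ContinuousLinearMap.hasFDerivAt (ContinuousLinearMap.proj (R := ℝ) (φ := fun _ : Fin n => ℝ) en)
  have hA := (hasDerivAt_pow 2 (x e0)).comp_hasFDerivAt x p0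
  have hB := (pn.add_const (1:ℝ)).const_mul (2:ℝ)
  have hinv := (hasDerivAt_inv hB0).comp_hasFDerivAt x hB
  have hq := hA.mul hinv
  have hsum := (HasFDerivAt.sum
      (u := Finset.univ.filter (fun i : Fin n => i ≠ e0 ∧ i ≠ en))
      (fun i _ => (hasDerivAt_pow 2 (x i)).comp_hasFDerivAt x
        (ContinuousLinearMap.hasFDerivAt (ContinuousLinearMap.proj (R := ℝ) (φ := fun _ : Fin n => ℝ) i)))).const_mul ((1:ℝ)/2)
  have hcub := ((((hasDerivAt_pow 3 (x en)).comp_hasFDerivAt x pn).add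
      (((hasDerivAt_pow 2 (x en)).comp_hasFDerivAt x pn).const_mul (3:ℝ))).const_mul ((6:ℝ)⁻¹))
  refine HasFDerivAt.congr_fderiv
    (HasFDerivAt.congr_of_eventuallyEq ((hq.add hsum).add hcub) ?_) ?_
  · filter_upwards with y
    simp only [UU, div_eq_mul_inv, Function.comp, ContinuousLinearMap.proj_apply,
      Pi.add_apply, Pi.mul_apply, Finset.sum_apply, Function.comp_apply]
    ring
  · apply ContinuousLinearMap.ext; intro v
    simp only [ContinuousLinearMap.add_apply, ContinuousLinearMap.smul_apply,
      ContinuousLinearMap.sum_apply, ContinuousLinearMap.proj_apply, smul_eq_mul,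
      ContinuousLinearMap.coe_smul', Pi.smul_apply, Function.comp_apply]
    rw [sum_split hne (fun j => gg n e0 en j x * v j)]
    have hrest : ∑ j ∈ Finset.univ.filter (fun i : Fin n => i ≠ e0 ∧ i ≠ en),
        gg n e0 en j x * v j
        = ∑ j ∈ Finset.univ.filter (fun i : Fin n => i ≠ e0 ∧ i ≠ en), x j * v j := by
      refine Finset.sum_congr rfl fun j hj => ?_
      simp only [Finset.mem_filter] at hj
      simp [gg, hj.2.1, hj.2.2]
    rw [hrest]
    have hmid : (1/2 : ℝ) * ∑ i ∈ Finset.univ.filter (fun i : Fin n => i ≠ e0 ∧ i ≠ en),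
        ((2:ℕ) * x i ^ (2-1)) * v i
        = ∑ j ∈ Finset.univ.filter (fun i : Fin n => i ≠ e0 ∧ i ≠ en), x j * v j := by
      rw [Finset.mul_sum]
      refine Finset.sum_congr rfl fun j hj => ?_
      push_cast; ring
    simp only [gg, if_pos rfl, if_neg hne, if_neg (Ne.symm hne), ↓reduceIte]
    rw [← hmid]
    push_cast
    field_simp
    ring

lemma fderiv_UU (n : ℕ) (e0 en : Fin n) (hne : e0 ≠ en) (x : Fin n → ℝ)
    (hx : x en + 1 ≠ 0) (i : Fin n) :
    fderiv ℝ (UU n e0 en) x (Pi.single i 1) = gg n e0 en i x := by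
  classical
  rw [(hasFDerivAt_UU n e0 en hne x hx).fderiv]
  simp only [ContinuousLinearMap.sum_apply, ContinuousLinearMap.smul_apply,
    ContinuousLinearMap.proj_apply, smul_eq_mul, Pi.single_apply]
  simp [mul_ite]

lemma hasFDerivAt_gg (n : ℕ) (e0 en : Fin n) (hne : e0 ≠ en) (x : Fin n → ℝ)
    (hx : x en + 1 ≠ 0) (i : Fin n) :
    HasFDerivAt (gg n e0 en i)
      (∑ j, HH n e0 en x i j • (ContinuousLinearMap.proj j : ((k : Fin n) → ℝ) →L[ℝ] ℝ)) x := by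
  classical
  have p0 : HasFDerivAt (fun y : Fin n → ℝ => y e0)
      (ContinuousLinearMap.proj e0 : ((k : Fin n) → ℝ) →L[ℝ] ℝ) x :=
    ContinuousLinearMap.hasFDerivAt (ContinuousLinearMap.proj (R := ℝ) (φ := fun _ : Fin n => ℝ) e0)
  have pn : HasFDerivAt (fun y : Fin n → ℝ => y en)
      (ContinuousLinearMap.proj en : ((k : Fin n) → ℝ) →L[ℝ] ℝ) x :=
    ContinuousLinearMap.hasFDerivAt (ContinuousLinearMap.proj (R := ℝ) (φ := fun _ : Fin n => ℝ) en)
  by_cases hi0 : i = e0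
  · rw [hi0]
    have hinv := (hasDerivAt_inv hx).comp_hasFDerivAt x (pn.add_const (1:ℝ))
    have hq := p0.mul hinv
    refine HasFDerivAt.congr_fderiv (HasFDerivAt.congr_of_eventuallyEq hq ?_) ?_
    · filter_upwards with y
      simp [gg, div_eq_mul_inv, Function.comp]
    · apply ContinuousLinearMap.ext; intro v
      simp only [ContinuousLinearMap.add_apply, ContinuousLinearMap.smul_apply,
        ContinuousLinearMap.sum_apply, ContinuousLinearMap.proj_apply, smul_eq_mul, Function.comp_apply]
      rw [sum_split hne (fun j => HH n e0 en x e0 j * v j)]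
      have hrest : ∑ j ∈ Finset.univ.filter (fun k : Fin n => k ≠ e0 ∧ k ≠ en),
          HH n e0 en x e0 j * v j = 0 := by
        refine Finset.sum_eq_zero fun j hj => ?_
        simp only [Finset.mem_filter] at hj
        simp [HH, hj.2.1, hj.2.2]
      rw [hrest]
      simp only [HH, if_pos rfl, if_neg hne, if_neg (Ne.symm hne), ↓reduceIte]
      field_simp
      ring
  · by_cases hin : i = en
    · rw [hin]
      have hc2 : (2:ℝ) * (x en + 1) ^ 2 ≠ 0 := mul_ne_zero two_ne_zero (pow_ne_zero 2 hx)
      have hA := (hasDerivAt_pow 2 (x e0)).comp_hasFDerivAt x p0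
      have hden := ((hasDerivAt_pow 2 (x en + 1)).comp_hasFDerivAt x
        (pn.add_const (1:ℝ))).const_mul (2:ℝ)
      have hinv := (hasDerivAt_inv hc2).comp_hasFDerivAt x hden
      have hq := hA.neg.mul hinv
      have hlin := (((hasDerivAt_pow 2 (x en)).comp_hasFDerivAt x pn).add
        (pn.const_mul (2:ℝ))).const_mul ((2:ℝ)⁻¹)
      refine HasFDerivAt.congr_fderiv
        (HasFDerivAt.congr_of_eventuallyEq (hq.add hlin) ?_) ?_
      · filter_upwards with y
        simp only [gg, if_neg (Ne.symm hne), if_pos rfl]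
        simp [div_eq_mul_inv, Function.comp]
        ring
      · apply ContinuousLinearMap.ext; intro v
        simp only [ContinuousLinearMap.add_apply, ContinuousLinearMap.smul_apply,
          ContinuousLinearMap.sum_apply, ContinuousLinearMap.proj_apply, smul_eq_mul,
          ContinuousLinearMap.neg_apply, Function.comp_apply, Pi.neg_apply]
        rw [sum_split hne (fun j => HH n e0 en x en j * v j)]
        have hrest : ∑ j ∈ Finset.univ.filter (fun k : Fin n => k ≠ e0 ∧ k ≠ en),
            HH n e0 en x en j * v j = 0 := by
          refine Finset.sum_eq_zero fun j hj => ?_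
          simp only [Finset.mem_filter] at hj
          simp [HH, Ne.symm hne, hj.2.1, hj.2.2]
        rw [hrest]
        simp only [HH, if_pos rfl, if_neg hne, if_neg (Ne.symm hne), ↓reduceIte]
        push_cast
        field_simp
        ring
    · have hp : HasFDerivAt (fun y : Fin n → ℝ => y i)
          (ContinuousLinearMap.proj i : ((k : Fin n) → ℝ) →L[ℝ] ℝ) x :=
        ContinuousLinearMap.hasFDerivAt (ContinuousLinearMap.proj (R := ℝ) (φ := fun _ : Fin n => ℝ) i)
      refine HasFDerivAt.congr_fderiv (HasFDerivAt.congr_of_eventuallyEq hp ?_) ?_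
      · filter_upwards with y
        simp [gg, hi0, hin]
      · apply ContinuousLinearMap.ext; intro v
        simp only [ContinuousLinearMap.sum_apply, ContinuousLinearMap.smul_apply,
          ContinuousLinearMap.proj_apply, smul_eq_mul]
        simp [HH, hi0, hin, mul_ite]

lemma pd2_UU (n : ℕ) (e0 en : Fin n) (hne : e0 ≠ en) (x : Fin n → ℝ)
    (hx : 0 < x en + 1) (i j : Fin n) :
    pd2 (UU n e0 en) x i j = HH n e0 en x i j := by
  classical
  have hopen : IsOpen {y : Fin n → ℝ | 0 < y en + 1} :=
    isOpen_lt continuous_const ((continuous_apply en).add continuous_const)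
  have hev : (fun y => fderiv ℝ (UU n e0 en) y (Pi.single i 1)) =ᶠ[nhds x] gg n e0 en i := by
    filter_upwards [hopen.mem_nhds hx] with y hy
    exact fderiv_UU n e0 en hne y (ne_of_gt hy) i
  unfold pd2
  rw [hev.fderiv_eq, (hasFDerivAt_gg n e0 en hne x (ne_of_gt hx) i).fderiv]
  simp only [ContinuousLinearMap.sum_apply, ContinuousLinearMap.smul_apply,
    ContinuousLinearMap.proj_apply, smul_eq_mul, Pi.single_apply]
  simp [mul_ite]

lemma det_HH (n : ℕ) (e0 en : Fin n) (hlt : e0 < en) (x : Fin n → ℝ)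
    (hc : 0 < x en + 1) :
    Matrix.det (Matrix.of fun i j => HH n e0 en x i j) = 1 := by
  classical
  have hne : e0 ≠ en := ne_of_lt hlt
  have hc0 : x en + 1 ≠ 0 := ne_of_gt hc
  have h1 := Matrix.det_updateRow_add_smul_self
    (Matrix.of fun i j => HH n e0 en x i j) (Ne.symm hne) (x e0 / (x en + 1))
  rw [← h1]
  have hM' : (Matrix.of fun i j => HH n e0 en x i j).updateRow en
      ((Matrix.of fun i j => HH n e0 en x i j) en
        + (x e0 / (x en + 1)) • (Matrix.of fun i j => HH n e0 en x i j) e0)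
      = Matrix.of (fun i j =>
          if i = e0 then (if j = e0 then (x en + 1)⁻¹
            else if j = en then -(x e0) / (x en + 1) ^ 2 else 0)
          else if i = en then (if j = en then (x en + 1) else 0)
          else if j = i then (1:ℝ) else 0) := by
    ext i j
    rw [Matrix.updateRow_apply]
    by_cases hien : i = en
    · rw [if_pos hien, hien]
      simp only [Pi.add_apply, Pi.smul_apply, smul_eq_mul, Matrix.of_apply]
      by_cases hj0 : j = e0
      · rw [hj0]
        simp only [HH, if_pos rfl, if_neg hne, if_neg (Ne.symm hne), ↓reduceIte]
        field_simp
        ring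
      · by_cases hjn : j = en
        · rw [hjn]
          simp only [HH, if_pos rfl, if_neg hne, if_neg (Ne.symm hne), ↓reduceIte]
          field_simp
          ring
        · simp [HH, hj0, hjn, Ne.symm hne]
    · rw [if_neg hien]
      simp only [Matrix.of_apply, HH]
      by_cases hi0 : i = e0
      · simp [hi0]
      · simp [hi0, hien]
  rw [hM']
  rw [Matrix.det_of_upperTriangular (M := Matrix.of (fun i j =>
          if i = e0 then (if j = e0 then (x en + 1)⁻¹
            else if j = en then -(x e0) / (x en + 1) ^ 2 else 0)
          else if i = en then (if j = en then (x en + 1) else 0)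
          else if j = i then (1:ℝ) else 0)) (by
    intro i j hji
    have hji' : j < i := hji
    simp only [Matrix.of_apply]
    by_cases hi0 : i = e0
    · have hj0 : ¬ j = e0 := fun h => absurd ((h.trans hi0.symm) ▸ hji') (lt_irrefl _)
      have hjn : ¬ j = en := by
        intro h
        rw [h, hi0] at hji'
        exact absurd hji' (not_lt_of_gt hlt)
      simp [hi0, hj0, hjn]
    · by_cases hin : i = en
      · have hjn : ¬ j = en := fun h => absurd ((h.trans hin.symm) ▸ hji') (lt_irrefl _)
        simp [hi0, hin, hjn, Ne.symm hne]
      · have hji'' : ¬ j = i := fun h => absurd (h ▸ hji') (lt_irrefl _)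
        simp [hi0, hin, hji''])]
  have hone : ∏ j ∈ Finset.univ.filter (fun i : Fin n => i ≠ e0 ∧ i ≠ en),
      (Matrix.of (fun i j =>
          if i = e0 then (if j = e0 then (x en + 1)⁻¹
            else if j = en then -(x e0) / (x en + 1) ^ 2 else 0)
          else if i = en then (if j = en then (x en + 1) else 0)
          else if j = i then (1:ℝ) else 0)) j j = 1 := by
    refine Finset.prod_eq_one fun j hj => ?_
    simp only [Finset.mem_filter] at hj
    simp [hj.2.1, hj.2.2]
  rw [prod_split hne, hone]
  simp only [Matrix.of_apply, if_pos rfl, if_neg hne, if_neg (Ne.symm hne), ↓reduceIte]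
  field_simp

lemma posdef_HH (n : ℕ) (e0 en : Fin n) (hne : e0 ≠ en) (x : Fin n → ℝ)
    (hc : 0 < x en + 1) (ξ : Fin n → ℝ) (hξ : ξ ≠ 0) :
    0 < ∑ i, ∑ j, HH n e0 en x i j * ξ i * ξ j := by
  classical
  have hc0 : x en + 1 ≠ 0 := ne_of_gt hc
  set a := x e0 with ha
  set c := x en + 1 with hcc
  rw [sum_split hne (fun i => ∑ j, HH n e0 en x i j * ξ i * ξ j)]
  have he0 : ∑ j, HH n e0 en x e0 j * ξ e0 * ξ j
      = c⁻¹ * ξ e0 * ξ e0 + (-a / c ^ 2) * ξ e0 * ξ en := by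
    rw [sum_two hne _ (fun j hj0 hjn => by simp [HH, hj0, hjn])]
    simp [HH, hne, Ne.symm hne]
    rfl
  have hen : ∑ j, HH n e0 en x en j * ξ en * ξ j
      = (-a / c ^ 2) * ξ en * ξ e0 + ((a ^ 2 / c ^ 3 + c)) * ξ en * ξ en := by
    rw [sum_two hne _ (fun j hj0 hjn => by simp [HH, hne, Ne.symm hne, hj0, hjn])]
    simp [HH, hne, Ne.symm hne]
    rfl
  have hmid : ∑ i ∈ Finset.univ.filter (fun i : Fin n => i ≠ e0 ∧ i ≠ en),
      (∑ j, HH n e0 en x i j * ξ i * ξ j)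
      = ∑ i ∈ Finset.univ.filter (fun i : Fin n => i ≠ e0 ∧ i ≠ en), ξ i * ξ i := by
    refine Finset.sum_congr rfl fun i hi => ?_
    simp only [Finset.mem_filter] at hi
    simp only [HH, if_neg hi.2.1, if_neg hi.2.2]
    simp [ite_mul, Finset.sum_ite_eq]
  rw [he0, hen, hmid]
  set r := ∑ i ∈ Finset.univ.filter (fun i : Fin n => i ≠ e0 ∧ i ≠ en), ξ i * ξ i with hr
  have hrnn : 0 ≤ r := Finset.sum_nonneg fun i _ => mul_self_nonneg _
  have key : c⁻¹ * ξ e0 * ξ e0 + -a / c ^ 2 * ξ e0 * ξ en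
      + (-a / c ^ 2 * ξ en * ξ e0 + (a ^ 2 / c ^ 3 + c) * ξ en * ξ en) + r
      = (ξ e0 - a * ξ en / c) * (ξ e0 - a * ξ en / c) / c + c * (ξ en * ξ en) + r := by
    field_simp
    ring
  rw [key]
  have h1 : 0 ≤ (ξ e0 - a * ξ en / c) * (ξ e0 - a * ξ en / c) / c :=
    div_nonneg (mul_self_nonneg _) hc.le
  obtain ⟨i, hi⟩ := Function.ne_iff.mp hξ
  simp only [Pi.zero_apply] at hi
  by_cases hξn : ξ en = 0
  · by_cases hξ0 : ξ e0 = 0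
    · have him : i ∈ Finset.univ.filter (fun i : Fin n => i ≠ e0 ∧ i ≠ en) := by
        simp only [Finset.mem_filter, Finset.mem_univ, true_and]
        constructor
        · intro h; exact hi (h ▸ hξ0)
        · intro h; exact hi (h ▸ hξn)
      have : ξ i * ξ i ≤ r :=
        Finset.single_le_sum (fun j _ => mul_self_nonneg (ξ j)) him
      have hpos : 0 < ξ i * ξ i := mul_self_pos.mpr hi
      nlinarith [mul_self_nonneg (ξ en)]
    · have hpos : 0 < (ξ e0 - a * ξ en / c) * (ξ e0 - a * ξ en / c) / c := by
        rw [hξn]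
        simp only [mul_zero, zero_div, sub_zero]
        exact div_pos (mul_self_pos.mpr hξ0) hc
      nlinarith [mul_self_nonneg (ξ en)]
  · have hpos : 0 < c * (ξ en * ξ en) := mul_pos hc (mul_self_pos.mpr hξn)
    nlinarith

/-- The Mooney–Savin example: `u = x₁²/(2(xₙ+1)) + ½(x₂²+⋯+x_{n−1}²) + (xₙ³+3xₙ²)/6` is a
smooth solution of `det D²u = 1` in the half-space with positive definite Hessian, equals
`½|x′|²` on the boundary, and is not a polynomial. -/
theorem stmt13 (n : ℕ) (hn : 2 ≤ n)
    (u : (Fin n → ℝ) → ℝ)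
    (hu : ∀ x : Fin n → ℝ, u x =
      (x ⟨0, by omega⟩) ^ 2 / (2 * (x ⟨n - 1, by omega⟩ + 1))
      + (1/2) * ∑ i ∈ Finset.univ.filter
          (fun i : Fin n => i ≠ ⟨0, by omega⟩ ∧ i ≠ ⟨n - 1, by omega⟩), (x i) ^ 2
      + ((x ⟨n - 1, by omega⟩) ^ 3 + 3 * (x ⟨n - 1, by omega⟩) ^ 2) / 6) :
    ContDiffOn ℝ (⊤ : ℕ∞) u {x : Fin n → ℝ | 0 < x ⟨n - 1, by omega⟩} ∧
    (∀ x : Fin n → ℝ, 0 < x ⟨n - 1, by omega⟩ →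
      Matrix.det (Matrix.of fun i j => pd2 u x i j) = 1 ∧
      ∀ ξ : Fin n → ℝ, ξ ≠ 0 → 0 < ∑ i, ∑ j, pd2 u x i j * ξ i * ξ j) ∧
    (∀ x : Fin n → ℝ, x ⟨n - 1, by omega⟩ = 0 →
      u x = (1/2) * ∑ i ∈ Finset.univ.filter (fun i : Fin n => i ≠ ⟨n - 1, by omega⟩),
        (x i) ^ 2) ∧
    ¬ ∃ P : MvPolynomial (Fin n) ℝ, ∀ x : Fin n → ℝ, 0 < x ⟨n - 1, by omega⟩ →
      u x = MvPolynomial.eval x P := by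
  classical
  set e0 : Fin n := ⟨0, by omega⟩ with he0
  set en : Fin n := ⟨n - 1, by omega⟩ with hen
  have hlt : e0 < en := by
    rw [he0, hen, Fin.lt_def]
    simp; omega
  have hne : e0 ≠ en := ne_of_lt hlt
  have hueq : u = UU n e0 en := funext hu
  subst hueq
  refine ⟨?_, ?_, ?_, ?_⟩
  · -- smoothness
    have h1 : ContDiff ℝ (⊤ : ℕ∞) (fun x : Fin n → ℝ => (x e0) ^ 2) :=
      (ContinuousLinearMap.proj e0 : ((k : Fin n) → ℝ) →L[ℝ] ℝ).contDiff.pow 2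
    have h2 : ContDiff ℝ (⊤ : ℕ∞) (fun x : Fin n → ℝ => 2 * (x en + 1)) :=
      contDiff_const.mul
        ((ContinuousLinearMap.proj en : ((k : Fin n) → ℝ) →L[ℝ] ℝ).contDiff.add contDiff_const)
    have h3 : ContDiff ℝ (⊤ : ℕ∞) (fun x : Fin n → ℝ =>
        (1/2 : ℝ) * ∑ i ∈ Finset.univ.filter (fun i : Fin n => i ≠ e0 ∧ i ≠ en), (x i) ^ 2) :=
      contDiff_const.mul (ContDiff.sum fun i _ =>
        (ContinuousLinearMap.proj i : ((k : Fin n) → ℝ) →L[ℝ] ℝ).contDiff.pow 2)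
    have h4 : ContDiff ℝ (⊤ : ℕ∞) (fun x : Fin n → ℝ => ((x en) ^ 3 + 3 * (x en) ^ 2) / 6) :=
      (((ContinuousLinearMap.proj en : ((k : Fin n) → ℝ) →L[ℝ] ℝ).contDiff.pow 3).add
        (contDiff_const.mul
          ((ContinuousLinearMap.proj en : ((k : Fin n) → ℝ) →L[ℝ] ℝ).contDiff.pow 2))).div_const 6
    have : ContDiffOn ℝ (⊤ : ℕ∞) (UU n e0 en) {x : Fin n → ℝ | 0 < x en} := by
      refine ContDiffOn.add (ContDiffOn.add ?_ h3.contDiffOn) h4.contDiffOn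
      refine ContDiffOn.div h1.contDiffOn h2.contDiffOn ?_
      intro x hx
      simp only [Set.mem_setOf_eq] at hx
      positivity
    exact this
  · intro x hx
    have hc : 0 < x en + 1 := by linarith
    constructor
    · have hmat : (Matrix.of fun i j => pd2 (UU n e0 en) x i j)
          = Matrix.of fun i j => HH n e0 en x i j := by
        ext i j
        simp only [Matrix.of_apply]
        exact pd2_UU n e0 en hne x hc i j
      rw [hmat]
      exact det_HH n e0 en hlt x hc
    · intro ξ hξ
      have hrw : (∑ i, ∑ j, pd2 (UU n e0 en) x i j * ξ i * ξ j)
          = ∑ i, ∑ j, HH n e0 en x i j * ξ i * ξ j := by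
        refine Finset.sum_congr rfl fun i _ => Finset.sum_congr rfl fun j _ => ?_
        rw [pd2_UU n e0 en hne x hc i j]
      rw [hrw]
      exact posdef_HH n e0 en hne x hc ξ hξ
  · intro x hx
    have hset : Finset.univ.filter (fun i : Fin n => i ≠ en)
        = insert e0 (Finset.univ.filter (fun i : Fin n => i ≠ e0 ∧ i ≠ en)) := by
      ext i
      simp only [Finset.mem_filter, Finset.mem_univ, true_and, Finset.mem_insert]
      constructor
      · intro h
        by_cases h0 : i = e0
        · exact Or.inl h0
        · exact Or.inr ⟨h0, h⟩
      · rintro (rfl | h)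
        · exact hne
        · exact h.2
    have hnotmem : e0 ∉ Finset.univ.filter (fun i : Fin n => i ≠ e0 ∧ i ≠ en) := by
      simp
    rw [hset, Finset.sum_insert hnotmem]
    simp only [UU, hx]
    ring
  · rintro ⟨P, hP⟩
    set xt : ℝ → Fin n → ℝ := fun t i => if i = e0 then 1 else if i = en then t else 0 with hxt
    have hxten : ∀ t, xt t en = t := by
      intro t; simp [hxt, Ne.symm hne]
    have hxte0 : ∀ t, xt t e0 = 1 := by
      intro t; simp [hxt]
    have hval : ∀ t : ℝ, UU n e0 en (xt t) = 1 / (2 * (t + 1)) + (t ^ 3 + 3 * t ^ 2) / 6 := by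
      intro t
      have hS : ∑ i ∈ Finset.univ.filter (fun i : Fin n => i ≠ e0 ∧ i ≠ en),
          (xt t i) ^ 2 = 0 := by
        refine Finset.sum_eq_zero fun i hi => ?_
        simp only [Finset.mem_filter] at hi
        simp [hxt, hi.2.1, hi.2.2]
      simp only [UU, hS, hxten, hxte0]
      ring
    set g : Fin n → Polynomial ℝ :=
      fun i => if i = e0 then 1 else if i = en then Polynomial.X else 0 with hg
    set Q : Polynomial ℝ := MvPolynomial.eval₂ Polynomial.C g P with hQdef
    have hQ : ∀ t : ℝ, Q.eval t = MvPolynomial.eval (xt t) P := by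
      intro t
      have h := MvPolynomial.eval₂_comp_left (Polynomial.evalRingHom t) Polynomial.C g P
      simp only [hQdef]
      rw [show Polynomial.eval t (MvPolynomial.eval₂ Polynomial.C g P)
          = Polynomial.evalRingHom t (MvPolynomial.eval₂ Polynomial.C g P) from rfl, h]
      rw [show ((Polynomial.evalRingHom t).comp Polynomial.C) = RingHom.id ℝ from
        RingHom.ext fun r => by simp]
      rw [show ((Polynomial.evalRingHom t) ∘ g) = xt t from funext fun i => by
        by_cases h0 : i = e0
        · simp [hg, hxt, h0]
        · by_cases h1 : i = en
          · simp [hg, hxt, h0, h1, Ne.symm hne]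
          · simp [hg, hxt, h0, h1]]
      exact MvPolynomial.eval₂_id P
    have key : ∀ t ∈ Set.Ioi (0:ℝ),
        Polynomial.eval t (Polynomial.C 6 * (Polynomial.X + 1) * Q)
        = Polynomial.eval t (Polynomial.C 3
            + (Polynomial.X + 1) * (Polynomial.X ^ 3 + Polynomial.C 3 * Polynomial.X ^ 2)) := by
      intro t ht
      have ht' : (0:ℝ) < t := ht
      have h1 : UU n e0 en (xt t) = MvPolynomial.eval (xt t) P :=
        hP (xt t) (by rw [hxten]; exact ht')
      have h2 : Q.eval t = 1 / (2 * (t + 1)) + (t ^ 3 + 3 * t ^ 2) / 6 := by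
        rw [hQ, ← h1, hval]
      have ht1 : t + 1 ≠ 0 := by linarith
      simp only [Polynomial.eval_mul, Polynomial.eval_add, Polynomial.eval_C,
        Polynomial.eval_X, Polynomial.eval_pow, Polynomial.eval_one, h2]
      field_simp
      ring
    have hpoly := Polynomial.eq_of_infinite_eval_eq
      (Polynomial.C 6 * (Polynomial.X + 1) * Q)
      (Polynomial.C 3 + (Polynomial.X + 1) * (Polynomial.X ^ 3 + Polynomial.C 3 * Polynomial.X ^ 2))
      ((Set.Ioi_infinite (0:ℝ)).mono (fun t ht => key t ht))
    have hev := congrArg (Polynomial.eval (-1 : ℝ)) hpoly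
    simp only [Polynomial.eval_mul, Polynomial.eval_add, Polynomial.eval_C,
      Polynomial.eval_X, Polynomial.eval_pow, Polynomial.eval_one] at hev
    norm_num at hev
end

section
/- The function u(x₁, x₂, x₃) = (x₁² + x₂²)e^{x₃} + ¼e^{−x₃} − e^{x₃} satisfies σ₂(λ(D²u)) = 1 in ℝ³₊ = {x₃ > 0}, where σ₂ of a symmetric 3×3 matrix is the sum of its three 2×2 principal minors (the second elementary symmetric polynomial of the eigenvalues). Moreover, on the boundary {x₃ = 0}, u(x₁, x₂, 0) = x₁² + x₂² − 3/4 is a quadratic polynomial, while u is not a polynomial in ℝ³₊. -/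
/-!
The functions `(a (x₀² + x₁²) + b₀ x₀ + b₁ x₁ + d) e^{x₂} + c e^{-x₂}` form a five-parameter
family that is closed under partial differentiation, so the Hessian of such a function is
computed on the parameters, giving `σ₂(D²f) = (4a² + 4ad - b₀² - b₁²) e^{2x₂} + 4ac`.
For `u` (`a = 1`, `b₀ = b₁ = 0`, `d = -1`, `c = 1/4`) this is `1`. On the ray `(0, 0, t)` we have
`u = e^{-t}/4 - e^t`, so `u / e^t → -1`, whereas `P / e^t → 0` for every polynomial `P`.
-/

open Finset

open Real Filter Topology Polynomial

noncomputable def sigma2Hessian {m : ℕ} (f : (Fin m → ℝ) → ℝ) (x : Fin m → ℝ) : ℝ :=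
  (1/2) * ((∑ i, pd2 f x i i) ^ 2 - ∑ i, ∑ j, pd2 f x i j * pd2 f x j i)

structure ExpQuad where
  a : ℝ
  b₀ : ℝ
  b₁ : ℝ
  d : ℝ
  c : ℝ

namespace ExpQuad

noncomputable def toFun (p : ExpQuad) (x : Fin 3 → ℝ) : ℝ :=
  (p.a * (x 0 ^ 2 + x 1 ^ 2) + p.b₀ * x 0 + p.b₁ * x 1 + p.d) * exp (x 2) + p.c * exp (-x 2)

def pderiv (p : ExpQuad) : Fin 3 → ExpQuad :=
  ![⟨0, 2 * p.a, 0, p.b₀, 0⟩, ⟨0, 0, 2 * p.a, p.b₁, 0⟩, ⟨p.a, p.b₀, p.b₁, p.d, -p.c⟩]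

theorem hasFDerivAt_toFun (p : ExpQuad) (y : Fin 3 → ℝ) :
    HasFDerivAt p.toFun
      (∑ i, (p.pderiv i).toFun y • ContinuousLinearMap.proj (R := ℝ) (φ := fun _ : Fin 3 => ℝ) i)
      y := by
  have h := fun k : Fin 3 => hasFDerivAt_apply (𝕜 := ℝ) k y
  have H := ((((((((h 0).pow 2).add ((h 1).pow 2)).const_mul p.a).add ((h 0).const_mul p.b₀)).add
    ((h 1).const_mul p.b₁)).add_const p.d).mul (h 2).exp).add ((h 2).neg.exp.const_mul p.c)
  refine H.congr_fderiv (ContinuousLinearMap.ext fun v => ?_)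
  simp only [Fin.sum_univ_three, toFun, pderiv, Matrix.cons_val_zero, Matrix.cons_val_one,
    Matrix.cons_val, Pi.add_apply, Pi.neg_apply, add_apply, smul_apply, neg_apply,
    ContinuousLinearMap.proj_apply, smul_eq_mul, nsmul_eq_mul]
  ring

theorem fderiv_toFun_single (p : ExpQuad) (y : Fin 3 → ℝ) (i : Fin 3) :
    fderiv ℝ p.toFun y (Pi.single i 1) = (p.pderiv i).toFun y := by
  simp [(p.hasFDerivAt_toFun y).fderiv, Pi.single_apply]

theorem pd2_toFun (p : ExpQuad) (x : Fin 3 → ℝ) (i j : Fin 3) :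
    pd2 p.toFun x i j = ((p.pderiv i).pderiv j).toFun x := by
  simp only [pd2, fderiv_toFun_single]

theorem sigma2Hessian_toFun (p : ExpQuad) (x : Fin 3 → ℝ) :
    sigma2Hessian p.toFun x =
      (4 * p.a ^ 2 + 4 * p.a * p.d - p.b₀ ^ 2 - p.b₁ ^ 2) * exp (x 2) ^ 2 + 4 * p.a * p.c := by
  have hexp : exp (x 2) * exp (-x 2) = 1 := by rw [← exp_add, add_neg_cancel, exp_zero]
  simp only [sigma2Hessian, Fin.sum_univ_three, pd2_toFun, pderiv, toFun, Matrix.cons_val_zero,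
    Matrix.cons_val_one, Matrix.cons_val]
  linear_combination (4 * p.a * p.c) * hexp

end ExpQuad

theorem MvPolynomial.exists_polynomial_eval_eq_eval_single {R σ : Type*} [CommSemiring R]
    [DecidableEq σ] (P : MvPolynomial σ R) (i : σ) :
    ∃ Q : R[X], ∀ t, Q.eval t = MvPolynomial.eval (Pi.single i t) P := by
  refine ⟨MvPolynomial.aeval (Pi.single i Polynomial.X) P, fun t => ?_⟩
  have hline : (fun j => Polynomial.aeval t ((Pi.single i Polynomial.X : σ → R[X]) j))
      = Pi.single i t := by
    funext j
    rcases eq_or_ne j i with rfl | hj <;> simp [*]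
  rw [← Polynomial.coe_aeval_eq_eval, MvPolynomial.comp_aeval_apply, hline]
  rfl

theorem Polynomial.not_eventuallyEq_of_tendsto_div_exp {f : ℝ → ℝ} {c : ℝ} (hc : c ≠ 0)
    (hf : Tendsto (fun t => f t / exp t) atTop (𝓝 c)) (Q : ℝ[X]) :
    ¬ (fun t => Q.eval t) =ᶠ[atTop] f := fun hQ =>
  hc (tendsto_nhds_unique
    (Q.tendsto_div_exp_atTop.congr' (hQ.mono fun t ht => by simp only [ht])) hf).symm

theorem tendsto_quarter_exp_neg_sub_exp_div_exp :
    Tendsto (fun t => (1/4 * exp (-t) - exp t) / exp t) atTop (𝓝 (-1)) := by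
  have h := tendsto_exp_neg_atTop_nhds_zero
  have := ((h.mul h).const_mul (1/4 : ℝ)).sub_const 1
  refine (by simpa using this : Tendsto _ _ _).congr fun t => ?_
  rw [sub_div, mul_div_assoc, div_self (exp_ne_zero t), exp_neg]
  field_simp

/-- Warren's example: `u = (x₁²+x₂²)e^{x₃} + ¼e^{−x₃} − e^{x₃}` satisfies
`σ₂(λ(D²u)) = ½((tr D²u)² − tr((D²u)²)) = 1` in `ℝ³₊`, equals the quadratic polynomial
`x₁² + x₂² − 3/4` on `{x₃ = 0}`, and is not a polynomial in `ℝ³₊`. -/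
theorem stmt14 (u : (Fin 3 → ℝ) → ℝ)
    (hu : ∀ x : Fin 3 → ℝ, u x = ((x 0) ^ 2 + (x 1) ^ 2) * Real.exp (x 2)
      + (1/4) * Real.exp (-(x 2)) - Real.exp (x 2)) :
    (∀ x : Fin 3 → ℝ, 0 < x 2 →
      (1/2) * ((∑ i, pd2 u x i i) ^ 2 - ∑ i, ∑ j, pd2 u x i j * pd2 u x j i) = 1) ∧
    (∀ x : Fin 3 → ℝ, x 2 = 0 → u x = (x 0) ^ 2 + (x 1) ^ 2 - 3/4) ∧
    ¬ ∃ P : MvPolynomial (Fin 3) ℝ, ∀ x : Fin 3 → ℝ, 0 < x 2 →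
      u x = MvPolynomial.eval x P := by
  have hu' : u = ExpQuad.toFun ⟨1, 0, 0, -1, 1/4⟩ :=
    funext fun x => by rw [hu, ExpQuad.toFun]; ring
  refine ⟨fun x _ => ?_, fun x hx => ?_, ?_⟩
  · have hσ := ExpQuad.sigma2Hessian_toFun ⟨1, 0, 0, -1, 1/4⟩ x
    norm_num at hσ
    rw [hu']
    exact hσ
  · rw [hu, hx, neg_zero, exp_zero]
    ring
  · rintro ⟨P, hP⟩
    obtain ⟨Q, hQ⟩ := P.exists_polynomial_eval_eq_eval_single 2
    refine Q.not_eventuallyEq_of_tendsto_div_exp (by norm_num)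
      tendsto_quarter_exp_neg_sub_exp_div_exp ?_
    filter_upwards [eventually_gt_atTop 0] with t ht
    rw [hQ, ← hP _ (by simpa), hu]
    simp
end

section
/- For n = 2 and Θ ∈ [0, π), the level set {(λ₁, λ₂) ∈ ℝ² : λ₁ > tan(Θ − π/2), λ₂ > tan(Θ − π/2), arctan λ₁ + arctan λ₂ = Θ} is the graph of a convex function: explicitly, on this set λ₂ = tan(Θ − arctan λ₁), and the function λ₁ ↦ tan(Θ − arctan λ₁) is convex on the interval where it is defined and where arctan λ₁ < Θ and Θ − arctan λ₁ < π/2. Equivalently, the region {(λ₁, λ₂) : arctan λ₁ + arctan λ₂ ≥ Θ} ∩ {λ₁, λ₂ > tan(Θ − π/2)} is convex. -/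
/-!
Put `a = tan (Θ - π / 2) = -cot Θ`. For `0 < Θ < π` and `λ₁ > a` the angle `Θ - arctan λ₁` lies in
`(-π/2, π/2)`, so `arctan λ₁ + arctan λ₂ ≥ Θ` is equivalent to `λ₂ ≥ tan (Θ - arctan λ₁)`, and
expanding the tangent shows that the level curve is the hyperbola branch
`(λ₁ - a) (λ₂ - a) = 1 + a²`. Hence `λ₁ ↦ tan (Θ - arctan λ₁) = a + (1 + a²) / (λ₁ - a)` is convex
on `λ₁ > a`, and the super-level region is its epigraph.
-/

open Real Set

section Phase

variable {Θ : ℝ}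

theorem tan_sub_pi_div_two_lt_iff (hΘ0 : 0 < Θ) (hΘπ : Θ < π) {t : ℝ} :
    tan (Θ - π / 2) < t ↔ Θ - π / 2 < arctan t := by
  rw [← arctan_strictMono.lt_iff_lt, arctan_tan (by linarith) (by linarith)]

theorem arctan_tan_sub_arctan (hΘ0 : 0 < Θ) (hΘπ : Θ < π) {t : ℝ}
    (ht : tan (Θ - π / 2) < t) : arctan (tan (Θ - arctan t)) = Θ - arctan t := by
  rw [tan_sub_pi_div_two_lt_iff hΘ0 hΘπ] at ht
  exact arctan_tan (by linarith [arctan_lt_pi_div_two t]) (by linarith)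

theorem tan_sub_arctan_le_iff (hΘ0 : 0 < Θ) (hΘπ : Θ < π) {t : ℝ}
    (ht : tan (Θ - π / 2) < t) (s : ℝ) : tan (Θ - arctan t) ≤ s ↔ Θ ≤ arctan t + arctan s := by
  rw [← arctan_strictMono.le_iff_le, arctan_tan_sub_arctan hΘ0 hΘπ ht, sub_le_iff_le_add']

theorem tan_sub_pi_div_two_lt_tan_sub_arctan (hΘ0 : 0 < Θ) (hΘπ : Θ < π) {t : ℝ}
    (ht : tan (Θ - π / 2) < t) : tan (Θ - π / 2) < tan (Θ - arctan t) := by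
  rw [tan_sub_pi_div_two_lt_iff hΘ0 hΘπ, arctan_tan_sub_arctan hΘ0 hΘπ ht]
  linarith [arctan_lt_pi_div_two t]

theorem tan_sub_arctan_eq_add_div (hΘ0 : 0 < Θ) (hΘπ : Θ < π) {t : ℝ}
    (ht : tan (Θ - π / 2) < t) :
    tan (Θ - arctan t) =
      tan (Θ - π / 2) + (1 + tan (Θ - π / 2) ^ 2) / (t - tan (Θ - π / 2)) := by
  have hsin : 0 < sin Θ := sin_pos_of_pos_of_lt_pi hΘ0 hΘπ
  have htan : tan (Θ - π / 2) = -cos Θ / sin Θ := by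
    rw [tan_eq_sin_div_cos, sin_sub_pi_div_two, cos_sub_pi_div_two]
  have hden : sin Θ * t + cos Θ ≠ 0 := by
    rw [htan, div_lt_iff₀ hsin] at ht
    linarith
  have hsqrt : 0 < √(1 + t ^ 2) := sqrt_pos.2 (by positivity)
  rw [htan, tan_eq_sin_div_cos, sin_sub, cos_sub, sin_arctan, cos_arctan]
  field_simp
  rw [sin_sq_add_cos_sq, sub_neg_eq_add, add_comm (cos Θ)]
  field_simp
  linear_combination sin_sq_add_cos_sq Θ

theorem convexOn_add_div_sub {a c : ℝ} (hc : 0 ≤ c) :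
    ConvexOn ℝ (Ioi a) fun t => a + c / (t - a) := by
  have h := (((convexOn_zpow (𝕜 := ℝ) (-1)).translate_right (-a)).smul hc).add_const a
  have hdom : (fun z => -a + z) ⁻¹' Ioi 0 = Ioi a := by ext; simp
  rw [hdom] at h
  refine h.congr fun t _ => ?_
  simp only [Pi.add_apply, Function.comp_apply, zpow_neg_one, smul_eq_mul, neg_add_eq_sub]
  ring

theorem convexOn_tan_sub_arctan (hΘ0 : 0 < Θ) (hΘπ : Θ < π) :
    ConvexOn ℝ (Ioi (tan (Θ - π / 2))) fun t => tan (Θ - arctan t) :=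
  (convexOn_add_div_sub (by positivity)).congr fun _ ht =>
    (tan_sub_arctan_eq_add_div hΘ0 hΘπ ht).symm

theorem superlevelSet_arctan_add_arctan_eq_epigraph (hΘ0 : 0 < Θ) (hΘπ : Θ < π) :
    {p : ℝ × ℝ | Θ ≤ arctan p.1 + arctan p.2 ∧ tan (Θ - π / 2) < p.1 ∧ tan (Θ - π / 2) < p.2} =
      {p : ℝ × ℝ | p.1 ∈ Ioi (tan (Θ - π / 2)) ∧ tan (Θ - arctan p.1) ≤ p.2} := by
  ext ⟨x, y⟩
  simp only [mem_ofPred_eq, mem_Ioi]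
  constructor
  · rintro ⟨hsum, hx, -⟩
    exact ⟨hx, (tan_sub_arctan_le_iff hΘ0 hΘπ hx y).2 hsum⟩
  · rintro ⟨hx, hy⟩
    exact ⟨(tan_sub_arctan_le_iff hΘ0 hΘπ hx y).1 hy, hx,
      (tan_sub_pi_div_two_lt_tan_sub_arctan hΘ0 hΘπ hx).trans_le hy⟩

end Phase

/- At `Θ = 0` the bound `tan (Θ - π / 2)` is Mathlib's junk value `tan (-(π / 2)) = 0`,
not `-∞`. -/
theorem tan_zero_sub_pi_div_two : tan (0 - π / 2) = 0 := by
  rw [zero_sub, tan_neg, tan_pi_div_two, neg_zero]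

theorem superlevelSet_arctan_add_arctan_zero :
    {p : ℝ × ℝ | 0 ≤ arctan p.1 + arctan p.2 ∧ tan (0 - π / 2) < p.1 ∧ tan (0 - π / 2) < p.2} =
      Ioi 0 ×ˢ Ioi 0 := by
  ext ⟨x, y⟩
  simp only [tan_zero_sub_pi_div_two, mem_ofPred_eq, mem_prod, mem_Ioi]
  exact ⟨fun h => h.2, fun h => ⟨add_nonneg (arctan_pos.2 h.1).le (arctan_pos.2 h.2).le, h⟩⟩

/-- Convexity of the level set of the two-dimensional special Lagrangian operator at
critical and supercritical phase `Θ ∈ [0, π)`: on the level set `λ₂ = tan(Θ − arctan λ₁)`,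
the function `λ₁ ↦ tan(Θ − arctan λ₁)` is convex, and the super-level region is convex. -/
theorem stmt19 (Θ : ℝ) (hΘ0 : 0 ≤ Θ) (hΘπ : Θ < Real.pi) :
    (∀ l1 l2 : ℝ, Real.tan (Θ - Real.pi / 2) < l1 → Real.tan (Θ - Real.pi / 2) < l2 →
      Real.arctan l1 + Real.arctan l2 = Θ → l2 = Real.tan (Θ - Real.arctan l1)) ∧
    ConvexOn ℝ {t : ℝ | Real.tan (Θ - Real.pi / 2) < t ∧ Real.arctan t < Θ ∧
        Θ - Real.arctan t < Real.pi / 2}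
      (fun t => Real.tan (Θ - Real.arctan t)) ∧
    Convex ℝ {p : ℝ × ℝ | Θ ≤ Real.arctan p.1 + Real.arctan p.2 ∧
      Real.tan (Θ - Real.pi / 2) < p.1 ∧ Real.tan (Θ - Real.pi / 2) < p.2} := by
  refine ⟨fun l1 l2 _ _ hsum => ?_, ?_, ?_⟩
  · rw [← hsum, add_sub_cancel_left, tan_arctan]
  · have hconv : Convex ℝ {t : ℝ | tan (Θ - π / 2) < t ∧ arctan t < Θ ∧ Θ - arctan t < π / 2} :=
      OrdConnected.convex ⟨fun x hx y hy z hz => ⟨hx.1.trans_le hz.1,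
        (arctan_strictMono.monotone hz.2).trans_lt hy.2.1,
        by linarith [hx.2.2, arctan_strictMono.monotone hz.1]⟩⟩
    rcases hΘ0.eq_or_lt with rfl | hΘ0
    · refine ⟨hconv, fun t ⟨ht, hneg, _⟩ => ?_⟩
      rw [tan_zero_sub_pi_div_two] at ht
      exact ((arctan_lt_zero.1 hneg).not_gt ht).elim
    · exact (convexOn_tan_sub_arctan hΘ0 hΘπ).subset (fun t ht => ht.1) hconv
  · rcases hΘ0.eq_or_lt with rfl | hΘ0
    · rw [superlevelSet_arctan_add_arctan_zero]
      exact (convex_Ioi 0).prod (convex_Ioi 0)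
    · rw [superlevelSet_arctan_add_arctan_eq_epigraph hΘ0 hΘπ]
      exact (convexOn_tan_sub_arctan hΘ0 hΘπ).convex_epigraph
end
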